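/- For all integers n, m ≥ 1, the polynomial Q_n(m) is nonzero and lowdeg Q_n(m) ≥ ⌊m/2⌋. -/
import Mathlib


open Polynomial Filter

/-- The on-site energy polynomial `ε_n(α) = (−1)^n − Σ_{k=2}^{n+1} (−1)^{⌊n/k⌋} α^{k−1}` in `ℤ[α]`. -/
noncomputable def eps (n : ℕ) : Polynomial ℤ :=
  C ((-1 : ℤ) ^ n) - ∑ k ∈ Finset.Icc 2 (n + 1), C ((-1 : ℤ) ^ (n / k)) * X ^ (k - 1)

/-- `Q_n(m) = ∏_{s=1}^m (ε_{n+s}(α) − ε_n(α))`. -/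
noncomputable def Q (n m : ℕ) : Polynomial ℤ :=
  ∏ s ∈ Finset.Icc 1 m, (eps (n + s) - eps n)

/-- `lowdeg P`: the multiplicity of the root `α = 0`, i.e. the least `i` with nonzero
coefficient of `α^i`. -/
noncomputable def lowdeg (P : Polynomial ℤ) : ℕ := P.natTrailingDegree

lemma eps_coeff (N j : ℕ) (hj : 1 ≤ j) :
    (eps N).coeff j = if j ≤ N then -(-1 : ℤ) ^ (N / (j + 1)) else 0 := by
  unfold eps
  rw [Polynomial.coeff_sub, Polynomial.coeff_C, Polynomial.finset_sum_coeff]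
  simp only [Polynomial.coeff_C_mul, Polynomial.coeff_X_pow]
  rw [if_neg (by omega)]
  by_cases h : j ≤ N
  · rw [if_pos h, Finset.sum_eq_single (j + 1)]
    · simp
    · intro b hb hne
      simp only [Finset.mem_Icc] at hb
      rw [if_neg (by omega)]; ring
    · intro hmem
      simp only [Finset.mem_Icc] at hmem
      exact absurd ⟨by omega, by omega⟩ hmem
  · rw [if_neg h, Finset.sum_eq_zero]
    · ring
    · intro b hb
      simp only [Finset.mem_Icc] at hb
      rw [if_neg (by omega)]; ring

lemma eps_coeff_zero (N : ℕ) : (eps N).coeff 0 = (-1 : ℤ) ^ N := by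
  unfold eps
  rw [Polynomial.coeff_sub, Polynomial.coeff_C, Polynomial.finset_sum_coeff]
  simp only [Polynomial.coeff_C_mul, Polynomial.coeff_X_pow]
  rw [Finset.sum_eq_zero]
  · simp
  · intro b hb
    simp only [Finset.mem_Icc] at hb
    rw [if_neg (by omega)]; ring

lemma factor_coeff_top (n s : ℕ) (hs : 1 ≤ s) :
    (eps (n + s) - eps n).coeff (n + s) = -1 := by
  rw [Polynomial.coeff_sub, eps_coeff _ _ (by omega), eps_coeff _ _ (by omega)]
  rw [if_pos le_rfl, if_neg (by omega)]
  rw [Nat.div_eq_of_lt (by omega)]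
  ring

lemma factor_ne_zero (n s : ℕ) (hs : 1 ≤ s) : eps (n + s) - eps n ≠ 0 := by
  intro h
  have := factor_coeff_top n s hs
  rw [h] at this
  simp at this

lemma factor_td_even (n s : ℕ) (hs : 1 ≤ s) (he : Even (n + s) ↔ Even n) :
    1 ≤ (eps (n + s) - eps n).natTrailingDegree := by
  apply Polynomial.le_natTrailingDegree (factor_ne_zero n s hs)
  intro i hi
  interval_cases i
  rw [Polynomial.coeff_sub, eps_coeff_zero, eps_coeff_zero]
  rcases Nat.even_or_odd n with h | h
  · rw [Even.neg_one_pow h, Even.neg_one_pow (he.mpr h)]; ring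
  · rw [Odd.neg_one_pow h, Odd.neg_one_pow]
    · ring
    · rcases Nat.even_or_odd (n + s) with h2 | h2
      · exact absurd (he.mp h2) (Nat.not_even_iff_odd.mpr h)
      · exact h2

theorem Q_ne_zero_and_lowdeg_ge_half (n m : ℕ) (hn : 1 ≤ n) (hm : 1 ≤ m) :
    Q n m ≠ 0 ∧ m / 2 ≤ lowdeg (Q n m) := by
  clear hm
  unfold lowdeg
  induction m with
  | zero => simp [Q]
  | succ m ih =>
    obtain ⟨h1, h2⟩ := ih
    have hfac := factor_ne_zero n (m + 1) (by omega)
    have hQ : Q n (m + 1) = Q n m * (eps (n + (m + 1)) - eps n) := by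
      unfold Q
      rw [Finset.prod_Icc_succ_top (by omega)]
    rw [hQ]
    refine ⟨mul_ne_zero h1 hfac, ?_⟩
    rw [Polynomial.natTrailingDegree_mul h1 hfac]
    rcases Nat.even_or_odd (m + 1) with h | h
    · have htd := factor_td_even n (m + 1) (by omega) (by simp [Nat.even_add, h])
      have := Nat.even_iff.mp h
      omega
    · have := Nat.odd_iff.mp h
      omega
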